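/- Let σ_w > 0, a > 0, ρ = a², and let n, L be positive integers with N = nL. Let Q₀ be the Gaussian distribution N(0, σ_w²) on ℝ and Q_ρ the two-point Gaussian mixture with density q_ρ(z) = ½ φ_{a,σ_w²}(z) + ½ φ_{−a,σ_w²}(z). Then D(Q_ρ^N ‖ Q₀^⊗N) ≤ (cosh(ρ/σ_w²)^n − 1)/L. -/

import Mathlib

/-!
Relative entropy is dominated by the χ²-divergence, because `log x ≤ x - 1` gives
`f log (f / g) ≤ f² / g - f` pointwise. For the uniform mixture `f = L⁻¹ ∑ₜ Pₜ` of the slot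
densities, `∫ f² / q₀^⊗N` is the average of the cross terms `∫ Pₜ Pₜ' / q₀^⊗N`, and these factor
over the coordinates. For `t ≠ t'` every factor integrates to `1`; for `t = t'` each of the `n`
coordinates of slot `t` contributes `∫ q_ρ² / q₀ = cosh (ρ / σ_w²)` (completing the square), so
`χ² = (cosh (ρ / σ_w²) ^ n - 1) / L`.
-/

noncomputable def gaussDensity (m v z : ℝ) : ℝ :=
  (1 / Real.sqrt (2 * Real.pi * v)) * Real.exp (-(z - m) ^ 2 / (2 * v))

open MeasureTheory Real

section RelativeEntropy

lemma mul_log_div_le {x y : ℝ} (hx : 0 ≤ x) (hy : 0 < y) :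
    x * log (x / y) ≤ x ^ 2 / y - x := by
  rcases hx.eq_or_lt with rfl | hx
  · simp
  have h := mul_le_mul_of_nonneg_left (log_le_sub_one_of_pos (div_pos hx hy)) hx.le
  calc x * log (x / y) ≤ x * (x / y - 1) := h
    _ = x ^ 2 / y - x := by field_simp

lemma abs_log_le_add_inv {r : ℝ} (hr : 0 < r) : |log r| ≤ r + r⁻¹ := by
  have h₁ := log_le_sub_one_of_pos hr
  have h₂ := log_le_sub_one_of_pos (inv_pos.2 hr)
  rw [log_inv] at h₂
  exact abs_le.2 ⟨by linarith [inv_pos.2 hr], by linarith [inv_pos.2 hr]⟩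

lemma abs_mul_log_div_le {x y : ℝ} (hx : 0 ≤ x) (hy : 0 < y) :
    |x * log (x / y)| ≤ x ^ 2 / y + y := by
  rcases hx.eq_or_lt with rfl | hx
  · simp [hy.le]
  calc |x * log (x / y)| = x * |log (x / y)| := by rw [abs_mul, abs_of_pos hx]
    _ ≤ x * (x / y + (x / y)⁻¹) := by gcongr; exact abs_log_le_add_inv (div_pos hx hy)
    _ = x ^ 2 / y + y := by field_simp

variable {α : Type*} [MeasurableSpace α] {μ : Measure α}

theorem integral_mul_log_div_le {f g : α → ℝ} (hf : ∀ x, 0 ≤ f x) (hg : ∀ x, 0 < g x)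
    (hfi : Integrable f μ) (hgi : Integrable g μ) (hfg : Integrable (fun x ↦ f x ^ 2 / g x) μ) :
    ∫ x, f x * log (f x / g x) ∂μ ≤ ∫ x, f x ^ 2 / g x ∂μ - ∫ x, f x ∂μ := by
  have hmeas : AEStronglyMeasurable (fun x ↦ f x * log (f x / g x)) μ :=
    (hfi.aemeasurable.mul (hfi.aemeasurable.div hgi.aemeasurable).log).aestronglyMeasurable
  have hint : Integrable (fun x ↦ f x * log (f x / g x)) μ :=
    (hfg.add hgi).mono' hmeas (ae_of_all _ fun x ↦ abs_mul_log_div_le (hf x) (hg x))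
  rw [← integral_sub hfg hfi]
  exact integral_mono hint (hfg.sub hfi) fun x ↦ mul_log_div_le (hf x) (hg x)

end RelativeEntropy

section UniformMixture

variable {α ι : Type*} [MeasurableSpace α] {μ : Measure α} [Fintype ι]

lemma mul_sum_sq_div (c : ℝ) (P : ι → ℝ) (g : ℝ) :
    (c * ∑ t, P t) ^ 2 / g = c ^ 2 * ∑ t, ∑ t', P t * P t' / g := by
  rw [mul_pow, sq (∑ t, P t), Finset.sum_mul_sum, mul_div_assoc, Finset.sum_div]
  simp only [Finset.sum_div]

lemma integrable_mul_sum_sq_div {P : ι → α → ℝ} {g : α → ℝ} (c : ℝ)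
    (hP : ∀ t t', Integrable (fun x ↦ P t x * P t' x / g x) μ) :
    Integrable (fun x ↦ (c * ∑ t, P t x) ^ 2 / g x) μ := by
  simp only [mul_sum_sq_div]
  exact (integrable_finsetSum _ fun t _ ↦ integrable_finsetSum _ fun t' _ ↦ hP t t').const_mul _

theorem integral_uniformMixture_sq_div [DecidableEq ι] [Nonempty ι] {P : ι → α → ℝ}
    {g : α → ℝ} {K : ℝ} (hP : ∀ t t', Integrable (fun x ↦ P t x * P t' x / g x) μ)
    (hK : ∀ t t', ∫ x, P t x * P t' x / g x ∂μ = if t = t' then K else 1) :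
    ∫ x, ((1 / Fintype.card ι : ℝ) * ∑ t, P t x) ^ 2 / g x ∂μ
      = (K - 1) / Fintype.card ι + 1 := by
  have hcard : (Fintype.card ι : ℝ) ≠ 0 := by positivity
  have hrow : ∀ t : ι, ∑ t', (if t = t' then K else 1) = K - 1 + Fintype.card ι := by
    intro t
    have hsplit : ∀ t' : ι, (if t = t' then K else 1) = (if t = t' then K - 1 else 0) + 1 := by
      intro t'; split_ifs <;> ring
    simp [hsplit, Finset.sum_add_distrib]
  simp only [mul_sum_sq_div]
  rw [integral_const_mul, integral_finsetSum _ fun t _ ↦ integrable_finsetSum _ fun t' _ ↦ hP t t']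
  simp only [integral_finsetSum _ fun t' _ ↦ hP _ t', hK, hrow, Finset.sum_const,
    Finset.card_univ, nsmul_eq_mul]
  field_simp

end UniformMixture

section ProductIntegrals

variable {ι κ E : Type*} [Fintype ι] [Fintype κ] [MeasureSpace E]
  [SigmaFinite (volume : Measure E)]

lemma integrable_prod_prod {h : ι → E → ℝ} (hh : ∀ ℓ, Integrable (h ℓ)) :
    Integrable fun z : ι → κ → E ↦ ∏ ℓ, ∏ i, h ℓ (z ℓ i) :=
  Integrable.fintype_prod fun ℓ ↦ Integrable.fintype_prod (f := fun _ ↦ h ℓ) fun _ ↦ hh ℓ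

lemma integral_prod_prod (h : ι → E → ℝ) :
    ∫ z : ι → κ → E, ∏ ℓ, ∏ i, h ℓ (z ℓ i) = ∏ ℓ, (∫ x, h ℓ x) ^ Fintype.card κ := by
  rw [integral_fintype_prod_volume_eq_prod (fun ℓ (y : κ → E) ↦ ∏ i, h ℓ (y i))]
  simp only [integral_fintype_prod_volume_eq_pow]

end ProductIntegrals

section SlotDensity

variable {ι E : Type*} [DecidableEq ι] {p q : E → ℝ}

def slotDensity (p q : E → ℝ) (t ℓ : ι) (x : E) : ℝ := if ℓ = t then p x else q x

lemma slotDensity_nonneg (hp : ∀ x, 0 ≤ p x) (hq : ∀ x, 0 ≤ q x) (t ℓ : ι) (x : E) :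
    0 ≤ slotDensity p q t ℓ x := by
  unfold slotDensity; split_ifs
  exacts [hp x, hq x]

lemma slotDensity_mul_div (t t' ℓ : ι) {x : E} (hx : q x ≠ 0) :
    slotDensity p q t ℓ x * slotDensity p q t' ℓ x / q x
      = if ℓ = t ∧ ℓ = t' then p x ^ 2 / q x else if ℓ = t ∨ ℓ = t' then p x else q x := by
  unfold slotDensity
  split_ifs <;> first | tauto | field_simp

variable [MeasureSpace E]

lemma integrable_slotDensity_mul_div (hq : ∀ x, 0 < q x) (hpi : Integrable p)
    (hqi : Integrable q) (hpq : Integrable fun x ↦ p x ^ 2 / q x) (t t' ℓ : ι) :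
    Integrable fun x ↦ slotDensity p q t ℓ x * slotDensity p q t' ℓ x / q x := by
  simp only [slotDensity_mul_div t t' ℓ (hq _).ne']
  split_ifs <;> assumption

lemma integral_slotDensity_mul_div (hq : ∀ x, 0 < q x) (hp1 : ∫ x, p x = 1)
    (hq1 : ∫ x, q x = 1) (t t' ℓ : ι) :
    ∫ x, slotDensity p q t ℓ x * slotDensity p q t' ℓ x / q x
      = if ℓ = t ∧ ℓ = t' then ∫ x, p x ^ 2 / q x else 1 := by
  simp only [slotDensity_mul_div t t' ℓ (hq _).ne']
  split_ifs <;> simp only [hp1, hq1]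

lemma integrable_slotDensity (hpi : Integrable p) (hqi : Integrable q) (t ℓ : ι) :
    Integrable (slotDensity p q t ℓ) := by
  unfold slotDensity; split_ifs <;> assumption

lemma integral_slotDensity (hp1 : ∫ x, p x = 1) (hq1 : ∫ x, q x = 1) (t ℓ : ι) :
    ∫ x, slotDensity p q t ℓ x = 1 := by
  unfold slotDensity; split_ifs <;> assumption

end SlotDensity

section SlottedMixture

variable {ι κ E : Type*} [Fintype ι] [Fintype κ]

def productDensity (q : E → ℝ) (z : ι → κ → E) : ℝ := ∏ ℓ, ∏ i, q (z ℓ i)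

lemma productDensity_pos {q : E → ℝ} (hq : ∀ x, 0 < q x) (z : ι → κ → E) :
    0 < productDensity q z :=
  Finset.prod_pos fun _ _ ↦ Finset.prod_pos fun _ _ ↦ hq _

variable [DecidableEq ι]

noncomputable def slottedMixture (p q : E → ℝ) (z : ι → κ → E) : ℝ :=
  (1 / Fintype.card ι : ℝ) * ∑ t, ∏ ℓ, ∏ i, slotDensity p q t ℓ (z ℓ i)

lemma slotProduct_mul_div_productDensity (p q : E → ℝ) (t t' : ι) (z : ι → κ → E) :
    (∏ ℓ, ∏ i, slotDensity p q t ℓ (z ℓ i)) * (∏ ℓ, ∏ i, slotDensity p q t' ℓ (z ℓ i))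
        / productDensity q z
      = ∏ ℓ, ∏ i, slotDensity p q t ℓ (z ℓ i) * slotDensity p q t' ℓ (z ℓ i) / q (z ℓ i) := by
  simp only [productDensity, Finset.prod_mul_distrib, Finset.prod_div_distrib]

lemma slottedMixture_nonneg {p q : E → ℝ} (hp : ∀ x, 0 ≤ p x) (hq : ∀ x, 0 ≤ q x) (z : ι → κ → E) :
    0 ≤ slottedMixture p q z :=
  mul_nonneg (by positivity) <| Finset.sum_nonneg fun t _ ↦ Finset.prod_nonneg fun ℓ _ ↦
    Finset.prod_nonneg fun i _ ↦ slotDensity_nonneg hp hq t ℓ _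

variable [MeasureSpace E] [SigmaFinite (volume : Measure E)] {p q : E → ℝ}

lemma integrable_slotProduct_mul_div (hq : ∀ x, 0 < q x) (hpi : Integrable p)
    (hqi : Integrable q) (hpq : Integrable fun x ↦ p x ^ 2 / q x) (t t' : ι) :
    Integrable fun z : ι → κ → E ↦ (∏ ℓ, ∏ i, slotDensity p q t ℓ (z ℓ i))
      * (∏ ℓ, ∏ i, slotDensity p q t' ℓ (z ℓ i)) / productDensity q z := by
  simp only [slotProduct_mul_div_productDensity]
  exact integrable_prod_prod (h := fun ℓ x ↦ slotDensity p q t ℓ x * slotDensity p q t' ℓ x / q x)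
    fun ℓ ↦ integrable_slotDensity_mul_div hq hpi hqi hpq t t' ℓ

lemma integral_slotProduct_mul_div (hq : ∀ x, 0 < q x) (hp1 : ∫ x, p x = 1)
    (hq1 : ∫ x, q x = 1) (t t' : ι) :
    ∫ z : ι → κ → E, (∏ ℓ, ∏ i, slotDensity p q t ℓ (z ℓ i))
      * (∏ ℓ, ∏ i, slotDensity p q t' ℓ (z ℓ i)) / productDensity q z
      = if t = t' then (∫ x, p x ^ 2 / q x) ^ Fintype.card κ else 1 := by
  simp only [slotProduct_mul_div_productDensity]
  refine (integral_prod_prod (κ := κ)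
    fun ℓ x ↦ slotDensity p q t ℓ x * slotDensity p q t' ℓ x / q x).trans ?_
  simp only [integral_slotDensity_mul_div hq hp1 hq1, ite_pow, one_pow]
  split_ifs with h
  · simp [h]
  · exact Finset.prod_eq_one fun ℓ _ ↦ if_neg fun hℓ ↦ h (hℓ.1.symm.trans hℓ.2)

lemma integrable_slottedMixture (hpi : Integrable p) (hqi : Integrable q) :
    Integrable (slottedMixture p q : (ι → κ → E) → ℝ) :=
  (integrable_finsetSum _ fun t _ ↦
    integrable_prod_prod (integrable_slotDensity hpi hqi t)).const_mul _

lemma integral_slottedMixture [Nonempty ι] (hpi : Integrable p) (hqi : Integrable q)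
    (hp1 : ∫ x, p x = 1) (hq1 : ∫ x, q x = 1) :
    ∫ z : ι → κ → E, slottedMixture p q z = 1 := by
  simp only [slottedMixture]
  rw [integral_const_mul, integral_finsetSum _ fun t _ ↦
    integrable_prod_prod (integrable_slotDensity hpi hqi t)]
  simp [integral_prod_prod, integral_slotDensity hp1 hq1]

lemma integrable_slottedMixture_sq_div (hq : ∀ x, 0 < q x) (hpi : Integrable p)
    (hqi : Integrable q) (hpq : Integrable fun x ↦ p x ^ 2 / q x) :
    Integrable fun z : ι → κ → E ↦ slottedMixture p q z ^ 2 / productDensity q z :=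
  integrable_mul_sum_sq_div _ (integrable_slotProduct_mul_div (ι := ι) (κ := κ) hq hpi hqi hpq)

lemma integral_slottedMixture_sq_div [Nonempty ι] (hq : ∀ x, 0 < q x) (hpi : Integrable p)
    (hqi : Integrable q) (hp1 : ∫ x, p x = 1) (hq1 : ∫ x, q x = 1)
    (hpq : Integrable fun x ↦ p x ^ 2 / q x) :
    ∫ z : ι → κ → E, slottedMixture p q z ^ 2 / productDensity q z
      = ((∫ x, p x ^ 2 / q x) ^ Fintype.card κ - 1) / Fintype.card ι + 1 :=
  integral_uniformMixture_sq_div (integrable_slotProduct_mul_div hq hpi hqi hpq)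
    (integral_slotProduct_mul_div hq hp1 hq1)

theorem integral_slottedMixture_mul_log_le [Nonempty ι] (hp : ∀ x, 0 ≤ p x)
    (hq : ∀ x, 0 < q x) (hpi : Integrable p) (hqi : Integrable q) (hp1 : ∫ x, p x = 1)
    (hq1 : ∫ x, q x = 1) (hpq : Integrable fun x ↦ p x ^ 2 / q x) :
    ∫ z : ι → κ → E, slottedMixture p q z * log (slottedMixture p q z / productDensity q z)
      ≤ ((∫ x, p x ^ 2 / q x) ^ Fintype.card κ - 1) / Fintype.card ι := by
  calc _ ≤ (∫ z : ι → κ → E, slottedMixture p q z ^ 2 / productDensity q z)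
        - ∫ z : ι → κ → E, slottedMixture p q z :=
        integral_mul_log_div_le (slottedMixture_nonneg hp fun x ↦ (hq x).le)
          (productDensity_pos hq) (integrable_slottedMixture hpi hqi)
          (integrable_prod_prod fun _ ↦ hqi) (integrable_slottedMixture_sq_div hq hpi hqi hpq)
    _ = _ := by
        rw [integral_slottedMixture_sq_div hq hpi hqi hp1 hq1 hpq,
          integral_slottedMixture hpi hqi hp1 hq1]
        ring

end SlottedMixture

section Gaussian

variable {v : ℝ}

lemma gaussDensity_eq_gaussianPDFReal (m : ℝ) (hv : 0 ≤ v) :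
    gaussDensity m v = ProbabilityTheory.gaussianPDFReal m ⟨v, hv⟩ := by
  funext z
  simp [gaussDensity, ProbabilityTheory.gaussianPDFReal, one_div]
  rfl

lemma gaussDensity_pos (m : ℝ) (hv : 0 < v) (z : ℝ) : 0 < gaussDensity m v z := by
  rw [gaussDensity_eq_gaussianPDFReal m hv.le]
  exact ProbabilityTheory.gaussianPDFReal_pos _ _ _ fun h ↦ hv.ne' (congrArg NNReal.toReal h)

lemma integrable_gaussDensity (m : ℝ) (hv : 0 < v) : Integrable (gaussDensity m v) := by
  rw [gaussDensity_eq_gaussianPDFReal m hv.le]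
  exact ProbabilityTheory.integrable_gaussianPDFReal _ _

lemma integral_gaussDensity (m : ℝ) (hv : 0 < v) : ∫ z, gaussDensity m v z = 1 := by
  rw [gaussDensity_eq_gaussianPDFReal m hv.le]
  exact ProbabilityTheory.integral_gaussianPDFReal_eq_one _
    fun h ↦ hv.ne' (congrArg NNReal.toReal h)

/-- Completing the square in the exponent. -/
lemma gaussDensity_mul_div (m m' : ℝ) (hv : 0 < v) (z : ℝ) :
    gaussDensity m v z * gaussDensity m' v z / gaussDensity 0 v z
      = exp (m * m' / v) * gaussDensity (m + m') v z := by
  rw [div_eq_iff (gaussDensity_pos 0 hv z).ne']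
  have hexp : exp (-(z - m) ^ 2 / (2 * v)) * exp (-(z - m') ^ 2 / (2 * v))
      = exp (m * m' / v)
        * (exp (-(z - (m + m')) ^ 2 / (2 * v)) * exp (-(z - 0) ^ 2 / (2 * v))) := by
    rw [← exp_add, ← exp_add, ← exp_add]
    congr 1
    field_simp
    ring
  unfold gaussDensity
  linear_combination (1 / sqrt (2 * π * v)) ^ 2 * hexp

lemma integrable_gaussDensity_mul_div (m m' : ℝ) (hv : 0 < v) :
    Integrable fun z ↦ gaussDensity m v z * gaussDensity m' v z / gaussDensity 0 v z := by
  simp only [gaussDensity_mul_div m m' hv]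
  exact (integrable_gaussDensity _ hv).const_mul _

lemma integral_gaussDensity_mul_div (m m' : ℝ) (hv : 0 < v) :
    ∫ z, gaussDensity m v z * gaussDensity m' v z / gaussDensity 0 v z = exp (m * m' / v) := by
  simp only [gaussDensity_mul_div m m' hv]
  rw [integral_const_mul, integral_gaussDensity _ hv, mul_one]

end Gaussian

section Bpsk

/-- The density `q_ρ` of the paper, for `ρ = a²`: a BPSK symbol `±a` in Gaussian noise of
variance `v`. -/
noncomputable def bpskDensity (a v z : ℝ) : ℝ :=
  1 / 2 * gaussDensity a v z + 1 / 2 * gaussDensity (-a) v z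

variable (a : ℝ) {v : ℝ}

lemma bpskDensity_nonneg (hv : 0 < v) (z : ℝ) : 0 ≤ bpskDensity a v z := by
  have := gaussDensity_pos a hv z
  have := gaussDensity_pos (-a) hv z
  unfold bpskDensity
  positivity

lemma integrable_bpskDensity (hv : 0 < v) : Integrable (bpskDensity a v) :=
  ((integrable_gaussDensity a hv).const_mul _).add ((integrable_gaussDensity (-a) hv).const_mul _)

lemma integral_bpskDensity (hv : 0 < v) : ∫ z, bpskDensity a v z = 1 := by
  unfold bpskDensity
  rw [integral_add ((integrable_gaussDensity a hv).const_mul _)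
    ((integrable_gaussDensity (-a) hv).const_mul _), integral_const_mul, integral_const_mul,
    integral_gaussDensity a hv, integral_gaussDensity (-a) hv]
  norm_num

lemma bpskDensity_sq_div (z : ℝ) :
    bpskDensity a v z ^ 2 / gaussDensity 0 v z
      = 1 / 4 * (gaussDensity a v z * gaussDensity a v z / gaussDensity 0 v z)
        + 1 / 2 * (gaussDensity a v z * gaussDensity (-a) v z / gaussDensity 0 v z)
        + 1 / 4 * (gaussDensity (-a) v z * gaussDensity (-a) v z / gaussDensity 0 v z) := by
  unfold bpskDensity
  ring

lemma integrable_bpskDensity_sq_div (hv : 0 < v) :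
    Integrable fun z ↦ bpskDensity a v z ^ 2 / gaussDensity 0 v z := by
  simp only [bpskDensity_sq_div]
  exact (((integrable_gaussDensity_mul_div _ _ hv).const_mul _).add
    ((integrable_gaussDensity_mul_div _ _ hv).const_mul _)).add
    ((integrable_gaussDensity_mul_div _ _ hv).const_mul _)

lemma integral_bpskDensity_sq_div (hv : 0 < v) :
    ∫ z, bpskDensity a v z ^ 2 / gaussDensity 0 v z = cosh (a ^ 2 / v) := by
  have hΦ (c m m' : ℝ) :
      Integrable fun z ↦ c * (gaussDensity m v z * gaussDensity m' v z / gaussDensity 0 v z) :=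
    (integrable_gaussDensity_mul_div m m' hv).const_mul c
  simp only [bpskDensity_sq_div]
  rw [integral_add, integral_add]
  · simp only [integral_const_mul, integral_gaussDensity_mul_div _ _ hv, cosh_eq]
    ring_nf
  exacts [hΦ _ _ _, hΦ _ _ _, (hΦ _ _ _).add (hΦ _ _ _), hΦ _ _ _]

end Bpsk

-- `Fin L → Fin n → ℝ` indexes the coordinates of `ℝ^N` by (slot, position within the slot).
theorem stmt3_general (σw a ρ : ℝ) (hσ : 0 < σw) (hρ : ρ = a ^ 2)
    (n L : ℕ) (hL : 0 < L) :
    (∫ z : Fin L → Fin n → ℝ,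
        ((1 / (L : ℝ)) * ∑ t : Fin L, ∏ ℓ : Fin L, ∏ i : Fin n,
            (if ℓ = t then
              (1 / 2) * gaussDensity a (σw ^ 2) (z ℓ i)
                + (1 / 2) * gaussDensity (-a) (σw ^ 2) (z ℓ i)
            else gaussDensity 0 (σw ^ 2) (z ℓ i))) *
          Real.log
            (((1 / (L : ℝ)) * ∑ t : Fin L, ∏ ℓ : Fin L, ∏ i : Fin n,
                (if ℓ = t then
                  (1 / 2) * gaussDensity a (σw ^ 2) (z ℓ i)
                    + (1 / 2) * gaussDensity (-a) (σw ^ 2) (z ℓ i)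
                else gaussDensity 0 (σw ^ 2) (z ℓ i))) /
              (∏ ℓ : Fin L, ∏ i : Fin n, gaussDensity 0 (σw ^ 2) (z ℓ i))))
      ≤ (Real.cosh (ρ / σw ^ 2) ^ n - 1) / (L : ℝ) := by
  subst hρ
  have hv : 0 < σw ^ 2 := by positivity
  have : Nonempty (Fin L) := ⟨⟨0, hL⟩⟩
  have h := integral_slottedMixture_mul_log_le (ι := Fin L) (κ := Fin n) (bpskDensity_nonneg a hv)
    (gaussDensity_pos 0 hv) (integrable_bpskDensity a hv) (integrable_gaussDensity 0 hv)
    (integral_bpskDensity a hv) (integral_gaussDensity 0 hv) (integrable_bpskDensity_sq_div a hv)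
  rw [integral_bpskDensity_sq_div a hv] at h
  simpa only [slottedMixture, productDensity, slotDensity, bpskDensity, Fintype.card_fin] using h

/-- For the AWGN eavesdropper channel with noise variance `σw²`, BPSK
amplitude `a > 0`, `ρ = a²`, the relative entropy between the slotted mixture density
`q_ρ^N` (uniform slot among `L` slots of length `n`) and the product `q0^⊗N` is at most
`(cosh(ρ/σw²)^n − 1)/L`. Coordinates of `ℝ^N`, `N = n·L`, are modeled as
`Fin L → Fin n → ℝ` (slot × position), with Lebesgue (volume) reference measure. -/
theorem stmt3 (σw a ρ : ℝ) (hσ : 0 < σw) (ha : 0 < a) (hρ : ρ = a ^ 2)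
    (n L : ℕ) (hn : 0 < n) (hL : 0 < L) :
    (∫ z : Fin L → Fin n → ℝ,
        ((1 / (L : ℝ)) * ∑ t : Fin L, ∏ ℓ : Fin L, ∏ i : Fin n,
            (if ℓ = t then
              (1 / 2) * gaussDensity a (σw ^ 2) (z ℓ i)
                + (1 / 2) * gaussDensity (-a) (σw ^ 2) (z ℓ i)
            else gaussDensity 0 (σw ^ 2) (z ℓ i))) *
          Real.log
            (((1 / (L : ℝ)) * ∑ t : Fin L, ∏ ℓ : Fin L, ∏ i : Fin n,
                (if ℓ = t then
                  (1 / 2) * gaussDensity a (σw ^ 2) (z ℓ i)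
                    + (1 / 2) * gaussDensity (-a) (σw ^ 2) (z ℓ i)
                else gaussDensity 0 (σw ^ 2) (z ℓ i))) /
              (∏ ℓ : Fin L, ∏ i : Fin n, gaussDensity 0 (σw ^ 2) (z ℓ i))))
      ≤ (Real.cosh (ρ / σw ^ 2) ^ n - 1) / (L : ℝ) :=
  stmt3_general σw a ρ hσ hρ n L hL
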